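/- Let β be a real 3×3 matrix and S ∈ ℝ³. If the scalar triple product (S, ββᵀS, (ββᵀ)²S) = 0, then there exist two orthonormal vectors u₁, u₂ ∈ ℝ³ which are eigenvectors of ββᵀ and such that S lies in the linear span of {u₁, u₂}. -/

import Mathlib

open Matrix

/-- Scalar triple product of three vectors in `ℝ³`. -/
def triple (a b c : Fin 3 → ℝ) : ℝ := a ⬝ᵥ (crossProduct b c)

lemma master (A : Matrix (Fin 3) (Fin 3) ℝ) (S : Fin 3 → ℝ)
    (b : Fin 3 → (Fin 3 → ℝ)) (lam c : Fin 3 → ℝ)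
    (horth : ∀ i j, b i ⬝ᵥ b j = if i = j then 1 else 0)
    (heig : ∀ i, A *ᵥ b i = lam i • b i)
    (i j k : Fin 3) (hij : i ≠ j) (hik : i ≠ k) (hjk : j ≠ k)
    (hS : S = c i • b i + c j • b j + c k • b k)
    (hcase : c k = 0 ∨ lam i = lam j) :
    ∃ u₁ u₂ : Fin 3 → ℝ,
      u₁ ⬝ᵥ u₁ = 1 ∧ u₂ ⬝ᵥ u₂ = 1 ∧ u₁ ⬝ᵥ u₂ = 0 ∧
      (∃ μ₁ : ℝ, A *ᵥ u₁ = μ₁ • u₁) ∧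
      (∃ μ₂ : ℝ, A *ᵥ u₂ = μ₂ • u₂) ∧
      (∃ c₁ c₂ : ℝ, S = c₁ • u₁ + c₂ • u₂) := by
  rcases hcase with hck | hl
  · refine ⟨b i, b j, by simp [horth], by simp [horth], by simp [horth, hij], ⟨lam i, heig i⟩,
      ⟨lam j, heig j⟩, ⟨c i, c j, ?_⟩⟩
    rw [hS, hck]; simp
  · by_cases hc : c i = 0 ∧ c j = 0
    · refine ⟨b k, b i, by simp [horth], by simp [horth], by simp [horth, hik.symm],
        ⟨lam k, heig k⟩, ⟨lam i, heig i⟩, ⟨c k, 0, ?_⟩⟩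
      rw [hS, hc.1, hc.2]; simp
    · have hpos : 0 < c i ^ 2 + c j ^ 2 := by
        rcases not_and_or.mp hc with h' | h'
        · have : 0 < c i ^ 2 := by positivity
          nlinarith [sq_nonneg (c j)]
        · have : 0 < c j ^ 2 := by positivity
          nlinarith [sq_nonneg (c i)]
      set r := Real.sqrt (c i ^ 2 + c j ^ 2) with hr_def
      have hr : 0 < r := Real.sqrt_pos.mpr hpos
      have hrr : r * r = c i ^ 2 + c j ^ 2 := Real.mul_self_sqrt hpos.le
      set P : Fin 3 → ℝ := c i • b i + c j • b j with hP
      have hPP : P ⬝ᵥ P = c i ^ 2 + c j ^ 2 := by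
        simp [hP, add_dotProduct, dotProduct_add, smul_dotProduct, dotProduct_smul,
          horth, hij, hij.symm]
        ring
      refine ⟨r⁻¹ • P, b k, ?_, by simp [horth], ?_, ⟨lam i, ?_⟩, ⟨lam k, heig k⟩,
        ⟨r, c k, ?_⟩⟩
      · rw [smul_dotProduct, dotProduct_smul, hPP, ← hrr]
        simp only [smul_eq_mul]
        field_simp
      · rw [smul_dotProduct, hP, add_dotProduct, smul_dotProduct, smul_dotProduct,
          horth, horth]
        simp [hik, hjk]
      · rw [mulVec_smul, hP, mulVec_add, mulVec_smul, mulVec_smul, heig, heig, ← hl]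
        rw [smul_comm (c i), smul_comm (c j), ← smul_add, smul_comm]
      · rw [hS, smul_smul, mul_inv_cancel₀ hr.ne', one_smul]

lemma triple_key (A : Matrix (Fin 3) (Fin 3) ℝ) (S : Fin 3 → ℝ)
    (b : Fin 3 → (Fin 3 → ℝ)) (lam c : Fin 3 → ℝ)
    (horth : ∀ i j, b i ⬝ᵥ b j = if i = j then 1 else 0)
    (heig : ∀ i, A *ᵥ b i = lam i • b i)
    (hS : S = c 0 • b 0 + c 1 • b 1 + c 2 • b 2)
    (hinj : Function.Injective lam)
    (h : triple S (A *ᵥ S) ((A * A) *ᵥ S) = 0) :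
    c 0 = 0 ∨ c 1 = 0 ∨ c 2 = 0 := by
  have hAS : A *ᵥ S = (c 0 * lam 0) • b 0 + (c 1 * lam 1) • b 1 + (c 2 * lam 2) • b 2 := by
    rw [hS, mulVec_add, mulVec_add, mulVec_smul, mulVec_smul, mulVec_smul,
      heig, heig, heig]
    simp [smul_smul, mul_comm]
  have hAAS : (A * A) *ᵥ S = (c 0 * (lam 0 * lam 0)) • b 0 + (c 1 * (lam 1 * lam 1)) • b 1
      + (c 2 * (lam 2 * lam 2)) • b 2 := by
    rw [← mulVec_mulVec, hAS, mulVec_add, mulVec_add, mulVec_smul, mulVec_smul, mulVec_smul,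
      heig, heig, heig, smul_smul, smul_smul, smul_smul]
    ring_nf
  set U : Matrix (Fin 3) (Fin 3) ℝ := Matrix.of b with hU
  set V : Matrix (Fin 3) (Fin 3) ℝ :=
    Matrix.of (fun t s => c s * (lam s) ^ (t : ℕ)) with hV
  have hM : (Matrix.of ![S, A *ᵥ S, (A * A) *ᵥ S]) = V * U := by
    ext t s
    fin_cases t
    · simp [hS, Matrix.mul_apply, Fin.sum_univ_three, hV, hU]; try ring
    · simp [hAS, Matrix.mul_apply, Fin.sum_univ_three, hV, hU]; try ring
    · simp [hAAS, Matrix.mul_apply, Fin.sum_univ_three, hV, hU]; try ring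
  have hUU : U * Uᵀ = 1 := by
    ext a d
    have := horth a d
    simpa [Matrix.mul_apply, dotProduct, Matrix.one_apply, hU] using this
  have hdetU : det U * det U = 1 := by
    have := congrArg det hUU
    rwa [det_mul, det_transpose, det_one] at this
  have htr : triple S (A *ᵥ S) ((A * A) *ᵥ S) = det V * det U := by
    rw [triple, triple_product_eq_det,
      show (![S, A *ᵥ S, (A * A) *ᵥ S] : Matrix (Fin 3) (Fin 3) ℝ)
        = Matrix.of ![S, A *ᵥ S, (A * A) *ᵥ S] from rfl, hM, det_mul]
  have hdetV : det V = c 0 * c 1 * c 2 *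
      ((lam 1 - lam 0) * ((lam 2 - lam 0) * (lam 2 - lam 1))) := by
    rw [det_fin_three]
    simp [hV]
    ring
  have hV0 : det V = 0 := by
    rcases mul_eq_zero.mp (htr ▸ h) with h' | h'
    · exact h'
    · exfalso; rw [h', mul_zero] at hdetU; exact one_ne_zero hdetU.symm
  rw [hdetV] at hV0
  have h10 : lam 1 - lam 0 ≠ 0 := sub_ne_zero.mpr (fun e => (by decide : (1 : Fin 3) ≠ 0) (hinj e))
  have h20 : lam 2 - lam 0 ≠ 0 := sub_ne_zero.mpr (fun e => (by decide : (2 : Fin 3) ≠ 0) (hinj e))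
  have h21 : lam 2 - lam 1 ≠ 0 := sub_ne_zero.mpr (fun e => (by decide : (2 : Fin 3) ≠ 1) (hinj e))
  have : c 0 * c 1 * c 2 = 0 := by
    rcases mul_eq_zero.mp hV0 with h' | h'
    · exact h'
    · exact absurd h' (by simp [h10, h20, h21])
  rcases mul_eq_zero.mp this with h' | h'
  · rcases mul_eq_zero.mp h' with h'' | h''
    · exact Or.inl h''
    · exact Or.inr (Or.inl h'')
  · exact Or.inr (Or.inr h')

theorem span_of_triple_product_zero (β : Matrix (Fin 3) (Fin 3) ℝ) (S : Fin 3 → ℝ)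
    (h : triple S ((β * βᵀ) *ᵥ S) (((β * βᵀ) * (β * βᵀ)) *ᵥ S) = 0) :
    ∃ u₁ u₂ : Fin 3 → ℝ,
      u₁ ⬝ᵥ u₁ = 1 ∧ u₂ ⬝ᵥ u₂ = 1 ∧ u₁ ⬝ᵥ u₂ = 0 ∧
      (∃ μ₁ : ℝ, (β * βᵀ) *ᵥ u₁ = μ₁ • u₁) ∧
      (∃ μ₂ : ℝ, (β * βᵀ) *ᵥ u₂ = μ₂ • u₂) ∧
      (∃ c₁ c₂ : ℝ, S = c₁ • u₁ + c₂ • u₂) := by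
  have hA : (β * βᵀ).IsHermitian := by
    rw [← conjTranspose_eq_transpose_of_trivial]
    exact isHermitian_mul_conjTranspose_self β
  set A := β * βᵀ with hAdef
  obtain ⟨b, lam, c, horth, heig, hS⟩ :
      ∃ (b : Fin 3 → (Fin 3 → ℝ)) (lam c : Fin 3 → ℝ),
        (∀ i j, b i ⬝ᵥ b j = if i = j then 1 else 0) ∧
        (∀ i, A *ᵥ b i = lam i • b i) ∧
        S = c 0 • b 0 + c 1 • b 1 + c 2 • b 2 := by
    refine ⟨fun t => ⇑(hA.eigenvectorBasis t), hA.eigenvalues,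
      fun t => hA.eigenvectorBasis.repr (WithLp.toLp 2 S) t, ?_, fun i => hA.mulVec_eigenvectorBasis i, ?_⟩
    · intro i j
      have := orthonormal_iff_ite.mp hA.eigenvectorBasis.orthonormal i j
      simpa [PiLp.inner_apply, RCLike.inner_apply, dotProduct, mul_comm] using this
    · have h1 := congrArg WithLp.ofLp (hA.eigenvectorBasis.sum_repr (WithLp.toLp 2 S)).symm
      rw [Fin.sum_univ_three] at h1
      simpa using h1
  by_cases h01 : lam 0 = lam 1
  · exact master A S b lam c horth heig 0 1 2 (by decide) (by decide) (by decide) hS (Or.inr h01)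
  by_cases h02 : lam 0 = lam 2
  · refine master A S b lam c horth heig 0 2 1 (by decide) (by decide) (by decide) ?_ (Or.inr h02)
    rw [hS]; module
  by_cases h12 : lam 1 = lam 2
  · refine master A S b lam c horth heig 1 2 0 (by decide) (by decide) (by decide) ?_ (Or.inr h12)
    rw [hS]; module
  · have hinj : Function.Injective lam := by
      intro x y hxy
      by_contra hne
      fin_cases x <;> fin_cases y <;> simp_all
    rcases triple_key A S b lam c horth heig hS hinj h with h0 | h1 | h2
    · refine master A S b lam c horth heig 1 2 0 (by decide) (by decide) (by decide) ?_ (Or.inl h0)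
      rw [hS]; module
    · refine master A S b lam c horth heig 0 2 1 (by decide) (by decide) (by decide) ?_ (Or.inl h1)
      rw [hS]; module
    · exact master A S b lam c horth heig 0 1 2 (by decide) (by decide) (by decide) hS (Or.inl h2)
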